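/- Assume that 1 − T : M → M is invertible. Then the homomorphism φ : Adj(A(M,T)) → F(M,T) with φ(e_x) = (1, x, 0) is a group isomorphism; in particular the groups Adj(A(M,T)) and F(M,T) are isomorphic. -/

import Mathlib

/-!
Common setup: the adjoint group of the Alexander quandle `A(M,T)` (F.J.-B.J. Clauwens,
"The adjoint group of an Alexander quandle").

For an abelian group `M` with automorphism `T`, the Alexander quandle `A(M,T)` is `M` with
`y * x = T y + x - T x`, and the adjoint group `Adj(A(M,T))` is presented with generators
`e x` for `x : M` and relations `e (y * x) = (e x)⁻¹ * e y * e x`.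
-/

open scoped TensorProduct

namespace Clauwens

variable {M : Type*} [AddCommGroup M]

/-- The relations of the adjoint group of the Alexander quandle `A(M,T)`:
for each `x y : M`, the relation `e_{y*x} = e_x⁻¹ * e_y * e_x`, where `y*x = T y + x - T x`. -/
def rels (T : M ≃+ M) : Set (FreeGroup M) :=
  {r | ∃ x y : M, r = FreeGroup.of (T y + x - T x) *
      ((FreeGroup.of x)⁻¹ * FreeGroup.of y * FreeGroup.of x)⁻¹}

/-- The adjoint group `Adj(A(M,T))` of the Alexander quandle. -/
abbrev Adj (T : M ≃+ M) : Type _ := PresentedGroup (rels T)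

/-- The generator `e_x` of the adjoint group. -/
def e (T : M ≃+ M) (x : M) : Adj T := PresentedGroup.of x

/-- The quandle automorphism `p ↦ p * x = T p + x - T x` of `A(M,T)`. -/
def σ (T : M ≃+ M) (x : M) : Equiv.Perm M where
  toFun p := T p + (x - T x)
  invFun p := T.symm (p - (x - T x))
  left_inv p := by simp
  right_inv p := by simp

lemma σ_apply (T : M ≃+ M) (x p : M) : σ T x p = T p + (x - T x) := rfl

lemma σ_inv_apply (T : M ≃+ M) (x p : M) : (σ T x)⁻¹ p = T.symm (p - (x - T x)) := rfl

lemma σ_rel (T : M ≃+ M) (x y : M) :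
    σ T x * σ T y * (σ T x)⁻¹ = σ T (T y + x - T x) := by
  ext p
  simp only [Equiv.Perm.mul_apply, σ_apply, σ_inv_apply, map_add, map_sub,
    AddEquiv.apply_symm_apply]
  abel

/-- The homomorphism `ρ` from the adjoint group to the group of quandle automorphisms of
`A(M,T)` acting on the right of `M` (hence the `ᵐᵒᵖ`), induced by the right action
`p · e_x = p * x = T p + x - T x`; the automorphism by which `g` acts is `(ρ T g).unop`. -/
def ρ (T : M ≃+ M) : Adj T →* (Equiv.Perm M)ᵐᵒᵖ :=
  PresentedGroup.toGroup (f := fun x => MulOpposite.op (σ T x)) (by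
    rintro r ⟨x, y, rfl⟩
    simp only [map_mul, map_inv, FreeGroup.lift_apply_of, ← MulOpposite.op_inv, ← MulOpposite.op_mul,
      mul_inv_rev, inv_inv]
    rw [MulOpposite.op_eq_one_iff, ← σ_rel T x y]
    group)

/-- `γ(x,y) = e_0⁻¹ e_{x+y} e_y⁻¹ e_0 e_x⁻¹ e_0`, so that
`e_0⁻¹ e_{x+y} = γ(x,y) e_0⁻¹ e_x e_0⁻¹ e_y`. -/
def γ (T : M ≃+ M) (x y : M) : Adj T :=
  (e T 0)⁻¹ * e T (x + y) * (e T y)⁻¹ * e T 0 * (e T x)⁻¹ * e T 0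

/-- `λ(x,y) = γ(y,x)⁻¹ γ(x,y)`. -/
def lam (T : M ≃+ M) (x y : M) : Adj T := (γ T y x)⁻¹ * γ T x y

/-- The additive endomorphism `τ` of `M ⊗_ℤ M` with `τ(x ⊗ y) = T y ⊗ x`. -/
noncomputable def τmap (T : M ≃+ M) : M ⊗[ℤ] M →ₗ[ℤ] M ⊗[ℤ] M :=
  (TensorProduct.comm ℤ M M).toLinearMap ∘ₗ
    (LinearMap.lTensor M T.toAddMonoidHom.toIntLinearMap)

lemma τmap_tmul (T : M ≃+ M) (x y : M) : τmap T (x ⊗ₜ[ℤ] y) = T y ⊗ₜ[ℤ] x := rfl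

/-- `S(M,T) = coker(1 - τ) = (M ⊗_ℤ M)/im(1 - τ)`. -/
abbrev S (T : M ≃+ M) : Type _ :=
  (M ⊗[ℤ] M) ⧸ LinearMap.range (LinearMap.id - τmap T)

/-- The class `[x ⊗ y]` in `S(M,T)`. -/
noncomputable def cls (T : M ≃+ M) (x y : M) : S T := Submodule.Quotient.mk (x ⊗ₜ[ℤ] y)

lemma mk_τmap (T : M ≃+ M) (w : M ⊗[ℤ] M) :
    (Submodule.Quotient.mk (τmap T w) : S T) = Submodule.Quotient.mk w := by
  rw [Submodule.Quotient.eq]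
  exact ⟨-w, by simp [LinearMap.sub_apply]; abel⟩

lemma cls_T (T : M ≃+ M) (x y : M) : cls T (T x) (T y) = cls T x y := by
  have h1 : cls T (T x) (T y) = Submodule.Quotient.mk (τmap T (T y ⊗ₜ[ℤ] x)) := rfl
  have h2 : (Submodule.Quotient.mk (T y ⊗ₜ[ℤ] x) : S T)
      = Submodule.Quotient.mk (τmap T (x ⊗ₜ[ℤ] y)) := rfl
  rw [h1, mk_τmap, h2, mk_τmap]; rfl

lemma cls_add_left (T : M ≃+ M) (x x' y : M) :
    cls T (x + x') y = cls T x y + cls T x' y := by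
  simp only [cls, ← Submodule.Quotient.mk_add, TensorProduct.add_tmul]

lemma cls_add_right (T : M ≃+ M) (x y y' : M) :
    cls T x (y + y') = cls T x y + cls T x y' := by
  simp only [cls, ← Submodule.Quotient.mk_add, TensorProduct.tmul_add]

lemma cls_neg_left (T : M ≃+ M) (x y : M) : cls T (-x) y = -cls T x y := by
  simp only [cls, ← Submodule.Quotient.mk_neg, TensorProduct.neg_tmul]

lemma cls_zero_left (T : M ≃+ M) (y : M) : cls T 0 y = 0 := by
  simp [cls, TensorProduct.zero_tmul]

lemma cls_zero_right (T : M ≃+ M) (x : M) : cls T x 0 = 0 := by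
  simp [cls, TensorProduct.tmul_zero]

/-- `T^m` for `m : ℤ`. -/
def Tz (T : M ≃+ M) (m : ℤ) : M ≃+ M := (m • T : AddAut M)

lemma Tz_zero (T : M ≃+ M) (x : M) : Tz T 0 x = x := rfl

lemma Tz_one (T : M ≃+ M) (x : M) : Tz T 1 x = T x := by simp [Tz]

lemma Tz_add (T : M ≃+ M) (m n : ℤ) (x : M) : Tz T (m + n) x = Tz T m (Tz T n x) := by
  simp [Tz, add_zsmul, AddAut.add_apply]

lemma cls_Tz_shift (T : M ≃+ M) (m : ℤ) (x y : M) :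
    cls T (Tz T (m + 1) x) (Tz T (m + 1) y) = cls T (Tz T m x) (Tz T m y) := by
  have h : ∀ z : M, Tz T (m + 1) z = T (Tz T m z) := by
    intro z; rw [add_comm, Tz_add, Tz_one]
  rw [h, h, cls_T]

lemma cls_Tz (T : M ≃+ M) (m : ℤ) (x y : M) :
    cls T (Tz T m x) (Tz T m y) = cls T x y := by
  induction m using Int.induction_on with
  | zero => rfl
  | succ i ih => rw [cls_Tz_shift, ih]
  | pred i ih =>
      have h := cls_Tz_shift T (-(i : ℤ) - 1) x y
      rw [sub_add_cancel] at h
      rw [← h, ih]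

/-- `F(M,T)` is the set `ℤ × M × S(M,T)` equipped with the multiplication
`(k, x, α)(m, y, β) = (k + m, T^m x + y, α + β + [T^m x ⊗ y])`. -/
abbrev F (T : M ≃+ M) : Type _ := ℤ × M × S T

noncomputable instance (T : M ≃+ M) : Group (F T) where
  mul g h := (g.1 + h.1, Tz T h.1 g.2.1 + h.2.1, g.2.2 + h.2.2 + cls T (Tz T h.1 g.2.1) h.2.1)
  one := ((0 : ℤ), (0 : M), (0 : S T))
  inv g := (-g.1, -(Tz T (-g.1) g.2.1), -g.2.2 + cls T g.2.1 g.2.1)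
  mul_assoc g h k := by
    obtain ⟨a, x, α⟩ := g; obtain ⟨b, y, β⟩ := h; obtain ⟨c, z, δ⟩ := k
    refine Prod.ext (add_assoc a b c) (Prod.ext ?_ ?_)
    · show Tz T c (Tz T b x + y) + z = Tz T (b + c) x + (Tz T c y + z)
      rw [add_comm b c, Tz_add, map_add]
      abel
    · show α + β + cls T (Tz T b x) y + δ + cls T (Tz T c (Tz T b x + y)) z
        = α + (β + δ + cls T (Tz T c y) z) + cls T (Tz T (b + c) x) (Tz T c y + z)
      rw [add_comm b c, Tz_add, map_add, cls_add_left, cls_add_right]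
      have h1 : cls T (Tz T c (Tz T b x)) (Tz T c y) = cls T (Tz T b x) y := cls_Tz T c _ _
      rw [h1]
      abel
  one_mul g := by
    obtain ⟨a, x, α⟩ := g
    refine Prod.ext (zero_add a) (Prod.ext ?_ ?_)
    · show Tz T a 0 + x = x
      rw [map_zero, zero_add]
    · show 0 + α + cls T (Tz T a 0) x = α
      rw [map_zero, cls_zero_left, zero_add, add_zero]
  mul_one g := by
    obtain ⟨a, x, α⟩ := g
    refine Prod.ext (add_zero a) (Prod.ext ?_ ?_)
    · show Tz T 0 x + 0 = x
      rw [Tz_zero, add_zero]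
    · show α + 0 + cls T (Tz T 0 x) 0 = α
      rw [cls_zero_right, add_zero, add_zero]
  inv_mul_cancel g := by
    obtain ⟨a, x, α⟩ := g
    have hx : Tz T a (Tz T (-a) x) = x := by
      rw [← Tz_add, add_neg_cancel, Tz_zero]
    refine Prod.ext (neg_add_cancel a) (Prod.ext ?_ ?_)
    · show Tz T a (-(Tz T (-a) x)) + x = 0
      rw [map_neg, hx, neg_add_cancel]
    · show -α + cls T x x + α + cls T (Tz T a (-(Tz T (-a) x))) x = 0
      rw [map_neg, hx, cls_neg_left]
      abel

/-- The canonical augmentation `ε : Adj(A(M,T)) → ℤ`, with `ε(e_x) = 1` for all `x`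
(written multiplicatively since `Adj` is a multiplicative group). -/
def ε (T : M ≃+ M) : Adj T →* Multiplicative ℤ :=
  PresentedGroup.toGroup (f := fun _ => Multiplicative.ofAdd (1 : ℤ)) (by
    rintro r ⟨x, y, rfl⟩
    simp only [map_mul, map_inv, FreeGroup.lift_apply_of]
    group)

/-- The subgroup `F(M,T)⁰` of elements `(0, x, α)` of `F(M,T)`. -/
noncomputable def Fo (T : M ≃+ M) : Subgroup (F T) where
  carrier := {g | g.1 = 0}
  mul_mem' := by
    rintro ⟨a, x, α⟩ ⟨b, y, β⟩ (ha : a = 0) (hb : b = 0)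
    show a + b = 0
    rw [ha, hb, add_zero]
  one_mem' := rfl
  inv_mem' := by
    rintro ⟨a, x, α⟩ (ha : a = 0)
    show -a = 0
    rw [ha, neg_zero]

/-- The fundamental group `π₁(A(M,T), 0)` of the Alexander quandle based at `0 ∈ M`:
the elements of `ker ε` fixing the base point `0`. -/
def pi1 (T : M ≃+ M) : Subgroup (Adj T) where
  carrier := {g | g ∈ (ε T).ker ∧ (ρ T g).unop 0 = 0}
  one_mem' := ⟨(ε T).ker.one_mem, by simp⟩
  mul_mem' := by
    intro a b ha hb
    refine ⟨(ε T).ker.mul_mem ha.1 hb.1, ?_⟩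
    show ((ρ T) (a * b)).unop 0 = 0
    rw [map_mul, MulOpposite.unop_mul, Equiv.Perm.mul_apply, ha.2, hb.2]
  inv_mem' := by
    intro a ha
    refine ⟨(ε T).ker.inv_mem ha.1, ?_⟩
    show ((ρ T) a⁻¹).unop 0 = 0
    rw [map_inv, MulOpposite.unop_inv]
    exact Equiv.Perm.inv_eq_iff_eq.mpr ha.2.symm

/-!
Write `a x = e₀⁻¹ eₓ`. The quandle relations say that conjugation by `e₀` acts on the `a x`
as `T`, and that `a q * a x = a (T x) * a (q + (x - T x))`; so conjugation by `a (T u)` sends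
`a p` to `a (p + z) * (a z)⁻¹` with `z = u - T u`. Comparing the conjugations by `a (x + y)` and
by `a x * a y` shows that the defect `γ(x,y) = a (x + y) * (a x * a y)⁻¹` commutes with every
`a p`. As every `z` has the form `u - T u`, conjugating `γ(x,y)` by `a (T u)` yields
biadditivity and `γ(x,y) = γ(T y, x)`; hence `γ` also commutes with `e₀`, is central, and
factors through `S(M,T) = coker(1 - τ)`. Then `(k, x, α) ↦ e₀ ^ k * a x * γ(α)⁻¹` is a
homomorphism `F(M,T) → Adj(A(M,T))` inverse to `φ`.
-/

lemma commute_mul_inv_of_conj_eq {G : Type*} [Group G] {g h p : G}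
    (hc : g⁻¹ * p * g = h⁻¹ * p * h) : Commute (g * h⁻¹) p := by
  calc g * h⁻¹ * p = g * (h⁻¹ * p * h) * h⁻¹ := by group
    _ = p * (g * h⁻¹) := by rw [← hc]; group

section AdjointGroup

variable (T : M ≃+ M)

lemma e_conj (x y : M) : e T (T y + x - T x) = (e T x)⁻¹ * e T y * e T x := by
  have h : PresentedGroup.mk (rels T) (FreeGroup.of (T y + x - T x)) =
      PresentedGroup.mk (rels T) ((FreeGroup.of x)⁻¹ * FreeGroup.of y * FreeGroup.of x) :=
    PresentedGroup.mk_eq_mk_of_mul_inv_mem ⟨x, y, rfl⟩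
  simp only [map_mul, map_inv] at h
  exact h

lemma e_apply_eq_conj (p : M) : e T (T p) = (e T 0)⁻¹ * e T p * e T 0 := by
  simpa using e_conj T 0 p

def a (x : M) : Adj T := (e T 0)⁻¹ * e T x

lemma a_zero : a T 0 = 1 := inv_mul_cancel _

lemma e_zero_mul_a (x : M) : e T 0 * a T x = e T x := mul_inv_cancel_left _ _

lemma a_mul_e_zero (p : M) : a T p * e T 0 = e T 0 * a T (T p) := by
  rw [a, a, e_apply_eq_conj]
  group

lemma a_mul_e_zero_zpow (m : ℤ) (x : M) : a T x * e T 0 ^ m = e T 0 ^ m * a T (Tz T m x) := by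
  induction m using Int.induction_on generalizing x with
  | zero => simp [Tz_zero]
  | succ i ih =>
      have h : Tz T (i + 1) x = T (Tz T i x) := by rw [add_comm, Tz_add, Tz_one]
      rw [zpow_add_one, ← mul_assoc, ih, mul_assoc, a_mul_e_zero, h, mul_assoc]
  | pred i ih =>
      have h : Tz T (-(i : ℤ)) x = T (Tz T (-(i : ℤ) - 1) x) := by
        rw [← Tz_one T, ← Tz_add, add_sub_cancel]
      calc a T x * e T 0 ^ (-(i : ℤ) - 1) = a T x * e T 0 ^ (-(i : ℤ)) * (e T 0)⁻¹ := by
            rw [zpow_sub_one, mul_assoc]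
        _ = e T 0 ^ (-(i : ℤ)) * (e T 0)⁻¹ * (e T 0 * a T (T (Tz T (-(i : ℤ) - 1) x))) *
              (e T 0)⁻¹ := by
            rw [ih, h]; group
        _ = e T 0 ^ (-(i : ℤ) - 1) * a T (Tz T (-(i : ℤ) - 1) x) := by
            rw [← a_mul_e_zero, zpow_sub_one]; group

lemma a_mul_a (q x : M) : a T q * a T x = a T (T x) * a T (q + (x - T x)) := by
  have hT : T q + T x - T (T x) = T (q + (x - T x)) := by rw [map_add, map_sub]; abel
  calc a T q * a T x = (e T 0)⁻¹ * e T q * (e T 0)⁻¹ * e T x := by simp only [a, mul_assoc]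
    _ = (e T 0)⁻¹ * (e T q * e T (T x)) * (e T 0)⁻¹ := by rw [e_apply_eq_conj T x]; group
    _ = (e T 0)⁻¹ * (e T (T x) * e T (T q + T x - T (T x))) * (e T 0)⁻¹ := by
        rw [e_conj]; group
    _ = a T (T x) * a T (q + (x - T x)) := by
        rw [hT, e_apply_eq_conj T (q + _)]; simp only [a]; group

lemma a_eq_a_apply_mul (x : M) : a T x = a T (T x) * a T (x - T x) := by
  simpa [a_zero] using a_mul_a T 0 x

lemma a_conj_a_apply (u p : M) :
    (a T (T u))⁻¹ * a T p * a T (T u) = a T (p + (u - T u)) * (a T (u - T u))⁻¹ := by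
  calc (a T (T u))⁻¹ * a T p * a T (T u)
      = (a T (T u))⁻¹ * (a T p * a T u) * (a T (u - T u))⁻¹ := by
        rw [a_eq_a_apply_mul T u]; group
    _ = a T (p + (u - T u)) * (a T (u - T u))⁻¹ := by rw [a_mul_a]; group

end AdjointGroup

section Gamma

variable (T : M ≃+ M)

lemma γ_eq (x y : M) : γ T x y = a T (x + y) * (a T x * a T y)⁻¹ := by
  simp only [γ, a]
  group

lemma γ_commute_a (x y p : M) : Commute (γ T x y) (a T p) := by
  obtain ⟨u, rfl⟩ := T.surjective x
  obtain ⟨v, rfl⟩ := T.surjective y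
  rw [γ_eq, ← map_add]
  refine commute_mul_inv_of_conj_eq ?_
  calc (a T (T (u + v)))⁻¹ * a T p * a T (T (u + v))
      = a T (p + ((u - T u) + (v - T v))) * (a T ((u - T u) + (v - T v)))⁻¹ := by
        rw [a_conj_a_apply, map_add, add_sub_add_comm]
    _ = ((a T (T v))⁻¹ * a T (p + (u - T u)) * a T (T v)) *
          ((a T (T v))⁻¹ * a T (u - T u) * a T (T v))⁻¹ := by
        rw [a_conj_a_apply, a_conj_a_apply, add_assoc]; group
    _ = (a T (T v))⁻¹ * ((a T (T u))⁻¹ * a T p * a T (T u)) * a T (T v) := by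
        rw [a_conj_a_apply T u p]; group
    _ = (a T (T u) * a T (T v))⁻¹ * a T p * (a T (T u) * a T (T v)) := by group

lemma γ_add_right (hs : Function.Surjective fun x : M => x - T x) (x y z : M) :
    γ T x (y + z) = γ T x y * γ T x z := by
  obtain ⟨u, rfl⟩ := hs z
  have hfix : (a T (T u))⁻¹ * γ T x y * a T (T u) = γ T x y := by
    rw [mul_assoc, (γ_commute_a T x y (T u)).eq, inv_mul_cancel_left]
  have hconj : (a T (T u))⁻¹ * γ T x y * a T (T u) = a T (x + y + (u - T u)) *
      (a T (y + (u - T u)))⁻¹ * a T (u - T u) * (a T (x + (u - T u)))⁻¹ := by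
    calc (a T (T u))⁻¹ * γ T x y * a T (T u)
        = ((a T (T u))⁻¹ * a T (x + y) * a T (T u)) *
          ((a T (T u))⁻¹ * a T y * a T (T u))⁻¹ *
          ((a T (T u))⁻¹ * a T x * a T (T u))⁻¹ := by
          rw [γ_eq]; group
      _ = _ := by rw [a_conj_a_apply, a_conj_a_apply, a_conj_a_apply]; group
  rw [← hfix, hconj, γ_eq, γ_eq, ← add_assoc]
  group

lemma γ_eq_γ_apply (hs : Function.Surjective fun x : M => x - T x) (x y : M) :
    γ T x y = γ T (T y) x := by
  have h : γ T x y = γ T (T y) (x + (y - T y)) := by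
    rw [γ_eq, γ_eq, a_mul_a]
    congr 2
    abel
  have hsplit : γ T (T y) (y - T y) = 1 := by
    rw [γ_eq, ← a_eq_a_apply_mul, add_sub_cancel, mul_inv_cancel]
  rw [h, γ_add_right T hs, hsplit, mul_one]

lemma γ_add_left (hs : Function.Surjective fun x : M => x - T x) (x x' y : M) :
    γ T (x + x') y = γ T x y * γ T x' y := by
  rw [γ_eq_γ_apply T hs, γ_add_right T hs, ← γ_eq_γ_apply T hs, ← γ_eq_γ_apply T hs]

lemma γ_commute_e_zero (hs : Function.Surjective fun x : M => x - T x) (x y : M) :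
    Commute (γ T x y) (e T 0) := by
  have h : (e T 0)⁻¹ * γ T x y * e T 0 = γ T x y := by
    calc (e T 0)⁻¹ * γ T x y * e T 0
        = ((e T 0)⁻¹ * a T (x + y) * e T 0) *
          (((e T 0)⁻¹ * a T x * e T 0) * ((e T 0)⁻¹ * a T y * e T 0))⁻¹ := by
          rw [γ_eq]; group
      _ = γ T (T x) (T y) := by
          simp only [mul_assoc, a_mul_e_zero, inv_mul_cancel_left, γ_eq, map_add]
      _ = γ T x y := by rw [γ_eq_γ_apply T hs x y, γ_eq_γ_apply T hs (T y) x]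
  rw [commute_iff_eq]
  nth_rewrite 2 [← h]
  group

lemma γ_mem_center (hs : Function.Surjective fun x : M => x - T x) (x y : M) :
    γ T x y ∈ Subgroup.center (Adj T) := by
  refine Subgroup.mem_center_iff.mpr fun g => ?_
  refine Subgroup.mem_centralizer_singleton_iff.mp
    (PresentedGroup.generated_by (rels T) _ (fun z => ?_) g)
  rw [Subgroup.mem_centralizer_singleton_iff]
  show e T z * γ T x y = γ T x y * e T z
  rw [← e_zero_mul_a]
  exact ((γ_commute_e_zero T hs x y).mul_right (γ_commute_a T x y z)).symm.eq

end Gamma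

section CentralLift

open scoped IsMulCommutative

variable (T : M ≃+ M) (hs : Function.Surjective fun x : M => x - T x)

noncomputable def γBilin : M →ₗ[ℤ] M →ₗ[ℤ] Additive (Subgroup.center (Adj T)) :=
  AddMonoidHom.toIntLinearMap <| AddMonoidHom.mk'
    (fun x => AddMonoidHom.toIntLinearMap <| AddMonoidHom.mk'
      (fun y => Additive.ofMul ⟨γ T x y, γ_mem_center T hs x y⟩)
      fun y z => congrArg Additive.ofMul (Subtype.ext (γ_add_right T hs x y z)))
    fun x x' => LinearMap.ext fun y =>
      congrArg Additive.ofMul (Subtype.ext (γ_add_left T hs x x' y))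

lemma range_id_sub_τmap_le_ker_lift_γBilin :
    LinearMap.range (LinearMap.id - τmap T) ≤
      LinearMap.ker (TensorProduct.lift (γBilin T hs)) := by
  rintro _ ⟨m, rfl⟩
  have h : TensorProduct.lift (γBilin T hs) ∘ₗ (LinearMap.id - τmap T) = 0 :=
    TensorProduct.ext' fun x y => by
      show TensorProduct.lift (γBilin T hs) (x ⊗ₜ[ℤ] y - τmap T (x ⊗ₜ[ℤ] y)) = 0
      rw [τmap_tmul, map_sub, TensorProduct.lift.tmul, TensorProduct.lift.tmul]
      exact sub_eq_zero.mpr (congrArg Additive.ofMul (Subtype.ext (γ_eq_γ_apply T hs x y)))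
  exact LinearMap.congr_fun h m

noncomputable def γLift : S T →ₗ[ℤ] Additive (Subgroup.center (Adj T)) :=
  Submodule.liftQ _ (TensorProduct.lift (γBilin T hs))
    (range_id_sub_τmap_le_ker_lift_γBilin T hs)

lemma γLift_cls (x y : M) :
    γLift T hs (cls T x y) = Additive.ofMul ⟨γ T x y, γ_mem_center T hs x y⟩ :=
  rfl

noncomputable def ofS (α : S T) : Adj T :=
  (Additive.toMul (γLift T hs (-α)) : Subgroup.center (Adj T))

lemma ofS_zero : ofS T hs 0 = 1 := by simp [ofS]

lemma ofS_add (α β : S T) : ofS T hs (α + β) = ofS T hs α * ofS T hs β := by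
  simp [ofS, add_comm]

lemma ofS_cls (x y : M) : ofS T hs (cls T x y) = (γ T x y)⁻¹ := by
  simp [ofS, γLift_cls]

lemma commute_ofS (α : S T) (g : Adj T) : Commute (ofS T hs α) g :=
  (Subgroup.mem_center_iff.mp (Additive.toMul (γLift T hs (-α))).2 g).symm

lemma a_mul_a_eq_mul_ofS (x y : M) : a T x * a T y = a T (x + y) * ofS T hs (cls T x y) := by
  rw [← (commute_ofS T hs _ _).eq, ofS_cls, γ_eq]
  group

end CentralLift

section GroupF

variable (T : M ≃+ M)

@[simp]
lemma F_mk_mul_mk (k m : ℤ) (x y : M) (α β : S T) :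
    ((k, x, α) * (m, y, β) : F T) = (k + m, Tz T m x + y, α + β + cls T (Tz T m x) y) := rfl

@[simp]
lemma F_mk_inv (k : ℤ) (x : M) (α : S T) :
    ((k, x, α)⁻¹ : F T) = (-k, -Tz T (-k) x, -α + cls T x x) := rfl

lemma cls_neg_right (x y : M) : cls T x (-y) = -cls T x y := by
  simp only [cls, ← Submodule.Quotient.mk_neg, TensorProduct.tmul_neg]

lemma cls_apply_left (x y : M) : cls T (T y) x = cls T x y :=
  mk_τmap T (x ⊗ₜ[ℤ] y)

lemma F_conj (x y : M) :
    ((1, x, 0)⁻¹ * (1, y, 0) * (1, x, 0) : F T) = (1, T y + x - T x, 0) := by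
  have hx : T (Tz T (-1) x) = x := by rw [← Tz_one, ← Tz_add]; rfl
  simp only [F_mk_inv, F_mk_mul_mk, Tz_one, map_add, map_neg, hx, cls_add_left, cls_neg_left,
    cls_apply_left, Prod.mk.injEq]
  exact ⟨by norm_num, by abel, by abel⟩

noncomputable def adjToF : Adj T →* F T :=
  PresentedGroup.toGroup (f := fun x => (1, x, 0)) <| by
    rintro r ⟨x, y, rfl⟩
    simp only [map_mul, map_inv, FreeGroup.lift_apply_of, mul_inv_eq_one]
    exact (F_conj T x y).symm

lemma adjToF_e (x : M) : adjToF T (e T x) = (1, x, 0) := PresentedGroup.toGroup.of _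

lemma adjToF_a (x : M) : adjToF T (a T x) = (0, x, 0) := by
  have h0 : Tz T (-1) 0 = 0 := map_zero _
  simp [a, adjToF_e, h0, Tz_one, cls_zero_left]

lemma adjToF_e_zero_zpow (k : ℤ) : adjToF T (e T 0 ^ k) = (k, 0, 0) := by
  rw [map_zpow, adjToF_e]
  induction k using Int.induction_on with
  | zero => rfl
  | succ i ih => simp [zpow_add_one, ih, cls_zero_left]
  | pred i ih =>
      have h0 : Tz T (-1) 0 = 0 := map_zero _
      rw [zpow_sub_one, ih]
      simp [h0, cls_zero_left, sub_eq_add_neg]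

lemma adjToF_γ (x y : M) : adjToF T (γ T x y) = (0, 0, -cls T x y) := by
  simp [γ_eq, adjToF_a, Tz_zero, cls_add_left, cls_add_right, cls_neg_left, cls_neg_right]
  abel

lemma adjToF_ofS (hs : Function.Surjective fun x : M => x - T x) (α : S T) :
    adjToF T (ofS T hs α) = (0, 0, α) := by
  induction α using Submodule.Quotient.induction_on with | _ m => ?_
  induction m using TensorProduct.induction_on with
  | zero => simp [ofS_zero]; rfl
  | tmul x y =>
      rw [show Submodule.Quotient.mk (x ⊗ₜ[ℤ] y) = cls T x y from rfl, ofS_cls, map_inv,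
        adjToF_γ]
      simp [cls_zero_left]
  | add u v hu hv =>
      rw [Submodule.Quotient.mk_add, ofS_add, map_mul, hu, hv]
      simp [cls_zero_left]

end GroupF

section Isomorphism

variable (T : M ≃+ M) (hs : Function.Surjective fun x : M => x - T x)

noncomputable def ofF : F T →* Adj T :=
  MonoidHom.mk' (fun g => e T 0 ^ g.1 * a T g.2.1 * ofS T hs g.2.2) <| by
    rintro ⟨k, x, α⟩ ⟨m, y, β⟩
    symm
    calc e T 0 ^ k * a T x * ofS T hs α * (e T 0 ^ m * a T y * ofS T hs β)
        = e T 0 ^ k * (a T x * e T 0 ^ m) * a T y * (ofS T hs α * ofS T hs β) := by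
          rw [(commute_ofS T hs α _).mul_mul_mul_comm]; group
      _ = e T 0 ^ (k + m) * (a T (Tz T m x) * a T y) * ofS T hs (α + β) := by
          rw [a_mul_e_zero_zpow, zpow_add, ofS_add]; group
      _ = e T 0 ^ (k + m) * a T (Tz T m x + y) * ofS T hs (α + β + cls T (Tz T m x) y) := by
          rw [a_mul_a_eq_mul_ofS T hs, add_comm _ (cls T _ _)]; simp only [ofS_add]; group

lemma ofF_comp_adjToF : (ofF T hs).comp (adjToF T) = MonoidHom.id (Adj T) :=
  PresentedGroup.ext fun x => by
    show ofF T hs (adjToF T (e T x)) = e T x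
    rw [adjToF_e]
    simp [ofF, ofS_zero, e_zero_mul_a]

lemma adjToF_comp_ofF : (adjToF T).comp (ofF T hs) = MonoidHom.id (F T) := by
  ext ⟨k, x, α⟩ <;>
  simp [ofF, adjToF_e_zero_zpow, adjToF_a, adjToF_ofS, Tz_zero, cls_zero_left, cls_zero_right]

noncomputable def adjEquivF : Adj T ≃* F T :=
  (adjToF T).toMulEquiv (ofF T hs) (ofF_comp_adjToF T hs) (adjToF_comp_ofF T hs)

end Isomorphism

/-- If `1 - T` is invertible, the homomorphism `φ : Adj(A(M,T)) → F(M,T)` with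
`φ(e_x) = (1, x, 0)` is a group isomorphism; in particular `Adj(A(M,T)) ≅ F(M,T)`. -/
theorem statement12 (T : M ≃+ M) (hT : Function.Bijective fun x : M => x - T x) :
    (∀ φ : Adj T →* F T, (∀ x : M, φ (e T x) = (((1 : ℤ), x, (0 : S T)) : F T)) →
      Function.Bijective φ) ∧
    Nonempty (Adj T ≃* F T) := by
  refine ⟨fun φ hφ => ?_, ⟨adjEquivF T hT.2⟩⟩
  rw [PresentedGroup.ext (ψ := adjToF T) fun x => (hφ x).trans (adjToF_e T x).symm]
  exact (adjEquivF T hT.2).bijective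

end Clauwens
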